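/- arXiv:2212.08512 — 6 statements merged into one kernel-verified Lean document; each statement's English description precedes it below -/
import Mathlib

section
/- Let B be a unital complex star algebra (a unital ℂ-algebra with a star-ring structure compatible with the ℂ-action), let m ≥ 1, and let A be an invertible m × m complex matrix. Write ι : ℂ → B for the algebra map, Ā for the entrywise complex conjugate of A, and for a matrix M over B write Mᴴ for its conjugate transpose (transpose composed with the star of B). Suppose V is an m × m matrix over B with V·Vᴴ = Vᴴ·V = 1, d ∈ B satisfies d·d* = d*·d = 1, and V·(A.map ι)·Vᵗ = d • (A.map ι). Then V commutes with the matrix (|AĀ|).map ι, where |AĀ| denotes the positive semidefinite square root of the complex matrix (AĀ)ᴴ·(AĀ). -/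
/-!
Taking the conjugate transpose of `V A Vᵀ = d A` and then the entrywise star (which is
multiplicative here because the entries of `A` are central in `B`) turns the relation into
`V M = M W` with `M = (A Ā)ᴴ` and `W = d* V d` unitary. Unitarity of `V` and `W` then makes `V`
commute with `M Mᴴ = (A Ā)ᴴ (A Ā)`, hence with every polynomial in it, and the square root of a
Hermitian matrix is such a polynomial: the Lagrange interpolant of `√` on its eigenvalues.
-/

open Matrix ComplexOrder

/-- The square root of a positive semidefinite matrix, as defined in the older Mathlib
(`Matrix.PosSemidef.sqrt`, since removed). -/
noncomputable def Matrix.PosSemidef.sqrt {n 𝕜 : Type*} [Fintype n] [RCLike 𝕜] [DecidableEq n]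
    {A : Matrix n n 𝕜} (hA : A.PosSemidef) : Matrix n n 𝕜 :=
  hA.1.eigenvectorUnitary.1 * diagonal ((↑) ∘ (√·) ∘ hA.1.eigenvalues) *
  (star hA.1.eigenvectorUnitary : Matrix n n 𝕜)

open Polynomial

theorem Commute.aeval_right {R A : Type*} [CommSemiring R] [Semiring A] [Algebra R A] {x y : A}
    (h : Commute x y) (q : R[X]) : Commute x (aeval y q) := by
  induction q using Polynomial.induction_on' with
  | add p r hp hr => simpa using hp.add_right hr
  | monomial k c =>
    simpa [aeval_monomial] using (Algebra.commute_algebraMap_right c x).mul_right (h.pow_right k)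

theorem Unitary.commute_mul_star_self_of_mul_eq_mul {R : Type*} [Monoid R] [StarMul R] {u w m : R}
    (hu : u ∈ unitary R) (hw : w ∈ unitary R) (h : u * m = m * w) : Commute u (m * star m) := by
  have h' : w * star m = star m * u :=
    calc w * star m = w * star (u * m) * u := by
          rw [star_mul, mul_assoc, mul_assoc, Unitary.star_mul_self_of_mem hu, mul_one]
      _ = star m * u := by rw [h, star_mul, ← mul_assoc, Unitary.mul_star_self_of_mem hw, one_mul]
  calc u * (m * star m) = m * (w * star m) := by rw [← mul_assoc, h, mul_assoc]
    _ = m * star m * u := by rw [h', mul_assoc]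

namespace Matrix

theorem aeval_diagonal {R α n : Type*} [CommSemiring R] [Semiring α] [Algebra R α] [Fintype n]
    [DecidableEq n] (d : n → α) (q : R[X]) :
    aeval (diagonal d) q = diagonal fun i => aeval (d i) q := by
  rw [← diagonalAlgHom_apply (R := R), aeval_algHom_apply, aeval_pi_apply]
  rfl

namespace IsHermitian

variable {𝕜 n : Type*} [RCLike 𝕜] [Fintype n] [DecidableEq n] {H : Matrix n n 𝕜}

theorem aeval_eq (hH : H.IsHermitian) (q : 𝕜[X]) :
    aeval H q = Unitary.conjStarAlgAut 𝕜 _ hH.eigenvectorUnitary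
      (diagonal fun i => q.eval (hH.eigenvalues i : 𝕜)) := by
  conv_lhs => rw [hH.spectral_theorem]
  rw [aeval_algHom_apply, aeval_diagonal]
  rfl

theorem exists_aeval_eq_cfc (hH : H.IsHermitian) (f : ℝ → ℝ) :
    ∃ q : 𝕜[X], aeval H q = hH.cfc f := by
  have hinj : Set.InjOn ((↑) : ℝ → 𝕜) (Finset.univ.image hH.eigenvalues) :=
    RCLike.ofReal_injective.injOn
  refine ⟨Lagrange.interpolate (Finset.univ.image hH.eigenvalues) (↑) (fun t => (f t : 𝕜)), ?_⟩
  rw [hH.aeval_eq, IsHermitian.cfc]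
  congr 2
  ext i
  exact Lagrange.eval_interpolate_at_node _ hinj (Finset.mem_image_of_mem _ (Finset.mem_univ i))

theorem commute_map_cfc {R : Type*} [Ring R] [Algebra 𝕜 R] (ψ : Matrix n n 𝕜 →ₐ[𝕜] R)
    (hH : H.IsHermitian) {x : R} (hx : Commute x (ψ H)) (f : ℝ → ℝ) :
    Commute x (ψ (hH.cfc f)) := by
  obtain ⟨q, hq⟩ := hH.exists_aeval_eq_cfc f
  rw [← hq, ← aeval_algHom_apply]
  exact hx.aeval_right q

end IsHermitian

theorem PosSemidef.sqrt_eq_cfc {𝕜 n : Type*} [RCLike 𝕜] [Fintype n] [DecidableEq n]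
    {H : Matrix n n 𝕜} (hH : H.PosSemidef) : hH.sqrt = hH.1.cfc Real.sqrt :=
  rfl

section Star

variable {R : Type*}

theorem map_star_map_star {m n : Type*} [InvolutiveStar R] (M : Matrix m n R) :
    (M.map star).map star = M := by
  ext
  simp

variable [Semiring R] [StarRing R] {n : Type*} [Fintype n] [DecidableEq n]

theorem map_star_scalar_mul (r : R) (Y : Matrix n n R) :
    (scalar n r * Y).map star = Y.map star * scalar n (star r) := by
  ext i j
  simp

theorem star_scalar (r : R) : star (scalar n r) = scalar n (star r) := by
  simp [star_eq_conjTranspose, diagonal_conjTranspose]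

theorem scalar_mem_unitary {r : R} (hr : r ∈ unitary R) : scalar n r ∈ unitary (Matrix n n R) :=
  ⟨by rw [star_scalar, ← map_mul, Unitary.star_mul_self_of_mem hr, map_one],
   by rw [star_scalar, ← map_mul, Unitary.mul_star_self_of_mem hr, map_one]⟩

end Star

theorem conjTranspose_map_starRingEnd {m n : Type*} (A : Matrix m n ℂ) :
    Aᴴ.map (starRingEnd ℂ) = Aᵀ := by
  ext
  simp

theorem map_starRingEnd_conjTranspose {m n : Type*} (A : Matrix m n ℂ) :
    (A.map (starRingEnd ℂ))ᴴ = Aᵀ := by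
  ext
  simp

variable {B : Type*} [Ring B] [Algebra ℂ B] {l m n : Type*}

theorem commute_scalar_map_algebraMap [Fintype n] [DecidableEq n] (b : B) (c : Matrix n n ℂ) :
    Commute (scalar n b) (c.map (algebraMap ℂ B)) :=
  scalar_commute_iff.2 <| ext fun _ _ => (Algebra.commutes _ _).symm

variable [StarRing B] [StarModule ℂ B]

theorem conjTranspose_map_algebraMap (c : Matrix m n ℂ) :
    (c.map (algebraMap ℂ B))ᴴ = cᴴ.map (algebraMap ℂ B) :=
  (conjTranspose_map _ fun z => algebraMap_star_comm z).symm

theorem map_star_algebraMap_mul [Fintype m] (c : Matrix l m ℂ) (Y : Matrix m n B) :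
    (c.map (algebraMap ℂ B) * Y).map star
      = (c.map (starRingEnd ℂ)).map (algebraMap ℂ B) * Y.map star := by
  ext i j
  simp only [mul_apply, map_apply, star_sum, star_mul, ← algebraMap_star_comm, starRingEnd_apply]
  exact Finset.sum_congr rfl fun _ _ => (Algebra.commutes _ _).symm

theorem map_star_mul_algebraMap [Fintype m] (Y : Matrix l m B) (c : Matrix m n ℂ) :
    (Y * c.map (algebraMap ℂ B)).map star
      = Y.map star * (c.map (starRingEnd ℂ)).map (algebraMap ℂ B) := by
  ext i j
  simp only [mul_apply, map_apply, star_sum, star_mul, ← algebraMap_star_comm, starRingEnd_apply]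
  exact Finset.sum_congr rfl fun _ _ => Algebra.commutes _ _

section Relation

variable [Fintype n] [DecidableEq n] {A : Matrix n n ℂ} {V : Matrix n n B} {d : B}

theorem map_star_mul_conjTranspose_map_algebraMap (hV : Vᴴ * V = 1)
    (h : V * A.map (algebraMap ℂ B) * Vᵀ = scalar n d * A.map (algebraMap ℂ B)) :
    V.map star * Aᴴ.map (algebraMap ℂ B) = Aᴴ.map (algebraMap ℂ B) * (scalar n (star d) * V) := by
  have h' := congrArg conjTranspose h
  rw [conjTranspose_mul, conjTranspose_mul, conjTranspose_mul, conjTranspose_map_algebraMap,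
    ← star_eq_conjTranspose (scalar n d), star_scalar, transpose_conjTranspose] at h'
  calc V.map star * Aᴴ.map (algebraMap ℂ B)
      = V.map star * (Aᴴ.map (algebraMap ℂ B) * Vᴴ) * V := by
        rw [mul_assoc, mul_assoc, hV, mul_one]
    _ = Aᴴ.map (algebraMap ℂ B) * (scalar n (star d) * V) := by rw [h', mul_assoc]

theorem mul_transpose_map_algebraMap (hV : Vᴴ * V = 1)
    (h : V * A.map (algebraMap ℂ B) * Vᵀ = scalar n d * A.map (algebraMap ℂ B)) :
    V * Aᵀ.map (algebraMap ℂ B) = Aᵀ.map (algebraMap ℂ B) * (V.map star * scalar n d) := by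
  have h' := congrArg (map · star) (map_star_mul_conjTranspose_map_algebraMap hV h)
  rwa [map_star_mul_algebraMap, map_star_algebraMap_mul, map_star_scalar_mul, star_star,
    map_star_map_star, conjTranspose_map_starRingEnd] at h'

theorem mul_conjTranspose_mul_map_starRingEnd (hV : Vᴴ * V = 1)
    (h : V * A.map (algebraMap ℂ B) * Vᵀ = scalar n d * A.map (algebraMap ℂ B)) :
    V * (A * A.map (starRingEnd ℂ))ᴴ.map (algebraMap ℂ B)
      = (A * A.map (starRingEnd ℂ))ᴴ.map (algebraMap ℂ B)
          * (star (scalar n d) * V * scalar n d) := by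
  rw [conjTranspose_mul, map_starRingEnd_conjTranspose, Matrix.map_mul, star_scalar]
  calc V * (Aᵀ.map (algebraMap ℂ B) * Aᴴ.map (algebraMap ℂ B))
      = Aᵀ.map (algebraMap ℂ B) * (V.map star * (scalar n d * Aᴴ.map (algebraMap ℂ B))) := by
        rw [← mul_assoc, mul_transpose_map_algebraMap hV h]
        simp only [mul_assoc]
    _ = Aᵀ.map (algebraMap ℂ B) * Aᴴ.map (algebraMap ℂ B)
          * (scalar n (star d) * V * scalar n d) := by
        rw [(commute_scalar_map_algebraMap d Aᴴ).eq, ← mul_assoc (V.map star),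
          map_star_mul_conjTranspose_map_algebraMap hV h]
        simp only [mul_assoc]

end Relation

end Matrix

theorem stmt0_general {B : Type*} [Ring B] [Algebra ℂ B] [StarRing B] [StarModule ℂ B]
    {m : ℕ} (A : Matrix (Fin m) (Fin m) ℂ)
    (V : Matrix (Fin m) (Fin m) B)
    (hV₁ : V * Vᴴ = 1) (hV₂ : Vᴴ * V = 1)
    (d : B) (hd₁ : d * star d = 1) (hd₂ : star d * d = 1)
    (hrel : V * (A.map (algebraMap ℂ B)) * Vᵀ = d • (A.map (algebraMap ℂ B))) :
    V * ((Matrix.posSemidef_conjTranspose_mul_self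
            (A * A.map (starRingEnd ℂ))).sqrt.map (algebraMap ℂ B))
      = ((Matrix.posSemidef_conjTranspose_mul_self
            (A * A.map (starRingEnd ℂ))).sqrt.map (algebraMap ℂ B)) * V := by
  have hV : V ∈ unitary (Matrix (Fin m) (Fin m) B) := ⟨hV₂, hV₁⟩
  have hD : scalar (Fin m) d ∈ unitary (Matrix (Fin m) (Fin m) B) := scalar_mem_unitary ⟨hd₂, hd₁⟩
  rw [smul_eq_diagonal_mul, ← scalar_apply] at hrel
  have hcomm := Unitary.commute_mul_star_self_of_mul_eq_mul hV
    (mul_mem (mul_mem (Unitary.star_mem hD) hV) hD) (mul_conjTranspose_mul_map_starRingEnd hV₂ hrel)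
  rw [star_eq_conjTranspose, conjTranspose_map_algebraMap, conjTranspose_conjTranspose,
    ← Matrix.map_mul] at hcomm
  rw [PosSemidef.sqrt_eq_cfc]
  exact ((posSemidef_conjTranspose_mul_self (A * A.map (starRingEnd ℂ))).1.commute_map_cfc
    ((Algebra.ofId ℂ B).mapMatrix : Matrix (Fin m) (Fin m) ℂ →ₐ[ℂ] Matrix (Fin m) (Fin m) B)
    hcomm Real.sqrt).eq

/-- If `V` is unitary over a unital complex star algebra `B`, `d ∈ B` is unitary,
and `V ⬝ (A.map ι) ⬝ Vᵗ = d • (A.map ι)` for an invertible complex matrix `A`, then `V` commutes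
with the image of `|A·Ā|`, the positive semidefinite square root of `(A·Ā)ᴴ·(A·Ā)`. -/
theorem stmt0 {B : Type*} [Ring B] [Algebra ℂ B] [StarRing B] [StarModule ℂ B]
    {m : ℕ} (hm : 1 ≤ m) (A : Matrix (Fin m) (Fin m) ℂ) (hA : IsUnit A)
    (V : Matrix (Fin m) (Fin m) B)
    (hV₁ : V * Vᴴ = 1) (hV₂ : Vᴴ * V = 1)
    (d : B) (hd₁ : d * star d = 1) (hd₂ : star d * d = 1)
    (hrel : V * (A.map (algebraMap ℂ B)) * Vᵀ = d • (A.map (algebraMap ℂ B))) :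
    V * ((Matrix.posSemidef_conjTranspose_mul_self
            (A * A.map (starRingEnd ℂ))).sqrt.map (algebraMap ℂ B))
      = ((Matrix.posSemidef_conjTranspose_mul_self
            (A * A.map (starRingEnd ℂ))).sqrt.map (algebraMap ℂ B)) * V :=
  stmt0_general A V hV₁ hV₂ d hd₁ hd₂ hrel
end

section
/- Let B be a unital complex star algebra, let m ≥ 1, and let A be an invertible m × m complex matrix. Write ι : ℂ → B for the algebra map and Mᴴ for the conjugate transpose of a matrix M over B. Suppose V is an m × m matrix over B with V·Vᴴ = Vᴴ·V = 1, d ∈ B satisfies d·d* = d*·d = 1, and V·(A.map ι)·Vᵗ = d • (A.map ι). Then V = (Aᵗ.map ι) · Vᶜ · ((Aᵗ)⁻¹.map ι) · (d • 1), where Vᶜ denotes the matrix obtained from V by applying the star of B to each entry (without transposing). -/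
open Matrix

private lemma mapStar_mul_left {B : Type*} [Ring B] [Algebra ℂ B] [StarRing B] [StarModule ℂ B]
    {m : ℕ} (C : Matrix (Fin m) (Fin m) ℂ) (M : Matrix (Fin m) (Fin m) B) :
    ((C.map (algebraMap ℂ B)) * M).map (star : B → B)
      = ((C.map (star : ℂ → ℂ)).map (algebraMap ℂ B)) * (M.map (star : B → B)) := by
  ext i j
  simp only [Matrix.map_apply, Matrix.mul_apply, star_sum]
  refine Finset.sum_congr rfl fun k _ => ?_
  rw [StarMul.star_mul, ← algebraMap_star_comm]
  exact (Algebra.commutes _ _).symm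

private lemma mapStar_mul_right {B : Type*} [Ring B] [Algebra ℂ B] [StarRing B] [StarModule ℂ B]
    {m : ℕ} (C : Matrix (Fin m) (Fin m) ℂ) (M : Matrix (Fin m) (Fin m) B) :
    (M * (C.map (algebraMap ℂ B))).map (star : B → B)
      = (M.map (star : B → B)) * ((C.map (star : ℂ → ℂ)).map (algebraMap ℂ B)) := by
  ext i j
  simp only [Matrix.map_apply, Matrix.mul_apply, star_sum]
  refine Finset.sum_congr rfl fun k _ => ?_
  rw [StarMul.star_mul, ← algebraMap_star_comm]
  exact Algebra.commutes _ _

/-- From the defining relations of `Õ_P^+` (V unitary, d unitary,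
`V (A.map ι) Vᵗ = d • (A.map ι)`) one derives `V = (Aᵗ.map ι) Vᶜ ((Aᵗ)⁻¹.map ι) (d • 1)`,
where `Vᶜ` is the entrywise star of `V`. -/
theorem stmt1 {B : Type*} [Ring B] [Algebra ℂ B] [StarRing B] [StarModule ℂ B]
    {m : ℕ} (hm : 1 ≤ m) (A : Matrix (Fin m) (Fin m) ℂ) (hA : IsUnit A)
    (V : Matrix (Fin m) (Fin m) B)
    (hV₁ : V * Vᴴ = 1) (hV₂ : Vᴴ * V = 1)
    (d : B) (hd₁ : d * star d = 1) (hd₂ : star d * d = 1)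
    (hrel : V * (A.map (algebraMap ℂ B)) * Vᵀ = d • (A.map (algebraMap ℂ B))) :
    V = (Aᵀ.map (algebraMap ℂ B)) * (V.map (star : B → B))
          * ((Aᵀ)⁻¹.map (algebraMap ℂ B)) * (d • (1 : Matrix (Fin m) (Fin m) B)) := by
  set ι := algebraMap ℂ B with hιdef
  have hAdet : IsUnit A.det := (Matrix.isUnit_iff_isUnit_det A).mp hA
  have hAHdet : IsUnit (Aᴴ).det := by
    rw [Matrix.det_conjTranspose]; exact hAdet.star
  set N := (Aᴴ).map ι with hN
  set Ninv := ((Aᴴ)⁻¹).map ι with hNinv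
  have hNN : N * Ninv = 1 := by
    rw [hN, hNinv, ← Matrix.map_mul, Matrix.mul_nonsing_inv _ hAHdet]
    exact Matrix.map_one _ (map_zero ι) (map_one ι)
  have hsc : Function.Semiconj (ι : ℂ → B) star star := fun c => (algebraMap_star_comm c)
  have hmapH : (A.map ι)ᴴ = N := (Matrix.conjTranspose_map (ι : ℂ → B) hsc).symm
  set Vm := V.map (star : B → B) with hVm
  -- Step 1: conjugate transpose of the defining relation
  have h1 : Vm * N * Vᴴ = star d • N := by
    have h := congrArg Matrix.conjTranspose hrel
    rw [Matrix.conjTranspose_mul, Matrix.conjTranspose_mul, hmapH] at h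
    have hVt : (Vᵀ)ᴴ = Vm := by ext i j; rfl
    rw [hVt, ← Matrix.mul_assoc] at h
    rw [h]
    ext i j
    simp only [Matrix.conjTranspose_apply, Matrix.smul_apply, smul_eq_mul, Matrix.map_apply]
    rw [StarMul.star_mul, ← algebraMap_star_comm]
    have : N i j = ι (star (A j i)) := rfl
    rw [this]
    exact Algebra.commutes _ _
  -- Step 2: multiply on the right by V
  have h2 : Vm * N = star d • (N * V) := by
    have h : Vm * N * Vᴴ * V = (star d • N) * V := by rw [h1]
    rw [Matrix.mul_assoc (Vm * N) Vᴴ V, hV₂, Matrix.mul_one] at h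
    rw [h, smul_mul_assoc]
  -- Step 3: multiply on the right by Ninv
  have h3 : Vm = star d • (N * V * Ninv) := by
    have h : Vm * N * Ninv = (star d • (N * V)) * Ninv := by rw [h2]
    rw [Matrix.mul_assoc Vm N Ninv, hNN, Matrix.mul_one] at h
    rw [h, smul_mul_assoc]
  -- Step 4: apply entrywise star
  have hsmulstar : ∀ X : Matrix (Fin m) (Fin m) B,
      (star d • X).map (star : B → B) = (X.map (star : B → B)) * (d • 1) := by
    intro X
    ext i j
    simp only [Matrix.map_apply, Matrix.smul_apply, smul_eq_mul, Matrix.mul_apply,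
      Matrix.one_apply, mul_ite, mul_zero, mul_one, ite_mul, zero_mul, Finset.sum_ite_eq, Finset.sum_ite_eq', Finset.mem_univ, if_true]
    rw [StarMul.star_mul, star_star]
  have hVV : Vm.map (star : B → B) = V := by
    ext i j; simp [hVm, Matrix.map_apply]
  have h4 : V = ((N * V * Ninv).map (star : B → B)) * (d • 1) := by
    have h := congrArg (fun M : Matrix (Fin m) (Fin m) B => M.map (star : B → B)) h3
    rw [hsmulstar, hVV] at h
    exact h
  -- Compute the entrywise star of N * V * Ninv
  have h5 : (N * V * Ninv).map (star : B → B)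
      = (Aᵀ.map ι) * Vm * ((Aᵀ)⁻¹.map ι) := by
    rw [hN, hNinv, mapStar_mul_right, mapStar_mul_left]
    have e1 : (Aᴴ).map (star : ℂ → ℂ) = Aᵀ := by
      ext i j; simp [Matrix.map_apply, Matrix.conjTranspose_apply]
    have e2 : ((Aᴴ)⁻¹).map (star : ℂ → ℂ) = (Aᵀ)⁻¹ := by
      rw [← Matrix.conjTranspose_nonsing_inv]
      ext i j
      rw [Matrix.map_apply, Matrix.conjTranspose_apply, star_star,
        ← Matrix.transpose_nonsing_inv, Matrix.transpose_apply]
    rw [e1, e2, hVm]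
  rw [h5] at h4
  exact h4
end

section
/- Let m ≥ 1 and let A be an m × m complex matrix such that A·Ā is unitary, where Ā is the entrywise complex conjugate of A. Then the trace of Aᴴ·A (which is a nonnegative real number, being the sum Σ_{i,j} |a_{ij}|²) satisfies Tr(Aᴴ A) ≥ m. In particular, if m ≥ 2 then Tr(Aᴴ A) ≥ 2. -/
open Matrix ComplexOrder

/-!
With `P = Aᴴ A` and `Q = Ā Aᵀ`, unitarity of `A Ā` gives `P Q = 1`, and `Q` is positive
semidefinite with the same trace as `P`. Then `(P - 1) Q (P - 1) = P + Q - 2` is positive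
semidefinite, so `2 Tr P = Tr P + Tr Q ≥ 2m`.
-/

section
variable {n R : Type*} [Fintype n] [CommRing R] [StarRing R]

theorem Matrix.trace_conjTranspose_transpose_mul_transpose (A : Matrix n n R) :
    (Aᵀᴴ * Aᵀ).trace = (Aᴴ * A).trace := by
  rw [trace_mul_comm, conjTranspose_transpose_eq_transpose_conjTranspose, ← transpose_mul,
    trace_transpose]

variable [DecidableEq n]

theorem Matrix.conjTranspose_mul_self_mul_conjTranspose_transpose_mul_transpose_eq_one
    {A : Matrix n n R} (hA : A * A.map (starRingEnd R) ∈ unitaryGroup n R) :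
    Aᴴ * A * (Aᵀᴴ * Aᵀ) = 1 := by
  have hbar : A.map (starRingEnd R) = Aᵀᴴ := rfl
  have h : A * (Aᵀᴴ * Aᵀ * Aᴴ) = 1 := by
    simpa only [hbar, star_eq_conjTranspose, conjTranspose_mul, conjTranspose_conjTranspose,
      Matrix.mul_assoc] using mem_unitaryGroup_iff.mp hA
  rw [mul_eq_one_comm]
  simpa only [Matrix.mul_assoc] using mul_eq_one_comm.mp h

end

theorem Matrix.two_mul_card_le_trace_add_trace {n 𝕜 : Type*} [Fintype n] [DecidableEq n]
    [RCLike 𝕜] {P Q : Matrix n n 𝕜} (hP : P.IsHermitian) (hQ : Q.PosSemidef) (hPQ : P * Q = 1) :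
    2 * (Fintype.card n : 𝕜) ≤ P.trace + Q.trace := by
  have hQP : Q * P = 1 := mul_eq_one_comm.mp hPQ
  have hsq : (P - 1)ᴴ * Q * (P - 1) = P + Q - 2 • 1 := by
    rw [conjTranspose_sub, hP.eq, conjTranspose_one]
    simp only [sub_mul, mul_sub, hPQ, hQP, Matrix.mul_one, Matrix.one_mul]
    abel
  have := (hQ.conjTranspose_mul_mul_same (P - 1)).trace_nonneg
  rw [hsq, trace_sub, trace_add, trace_smul, trace_one] at this
  simpa [sub_nonneg, nsmul_eq_mul] using this

theorem stmt2_general {m : ℕ} (A : Matrix (Fin m) (Fin m) ℂ)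
    (hAA : A * A.map (starRingEnd ℂ) ∈ Matrix.unitaryGroup (Fin m) ℂ) :
    (m : ℝ) ≤ ((Aᴴ * A).trace).re ∧ (2 ≤ m → (2 : ℝ) ≤ ((Aᴴ * A).trace).re) := by
  have h := two_mul_card_le_trace_add_trace (isHermitian_conjTranspose_mul_self A)
    (posSemidef_conjTranspose_mul_self Aᵀ)
    (conjTranspose_mul_self_mul_conjTranspose_transpose_mul_transpose_eq_one hAA)
  rw [trace_conjTranspose_transpose_mul_transpose, Fintype.card_fin] at h
  have hm : (m : ℝ) ≤ ((Aᴴ * A).trace).re := by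
    have := (Complex.le_def.mp h).1
    norm_num at this
    linarith
  exact ⟨hm, fun h2 => le_trans (by exact_mod_cast h2) hm⟩

/-- If `A` is an `m × m` complex matrix (`m ≥ 1`) such that `A · Ā` is unitary,
then `Tr(Aᴴ A) ≥ m`; in particular `Tr(Aᴴ A) ≥ 2` when `m ≥ 2`. -/
theorem stmt2 {m : ℕ} (hm : 1 ≤ m) (A : Matrix (Fin m) (Fin m) ℂ)
    (hAA : A * A.map (starRingEnd ℂ) ∈ Matrix.unitaryGroup (Fin m) ℂ) :
    (m : ℝ) ≤ ((Aᴴ * A).trace).re ∧ (2 ≤ m → (2 : ℝ) ≤ ((Aᴴ * A).trace).re) :=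
  stmt2_general A hAA
end

section
/- Let G be the free abelian group on the index set ℕ × ℤ (finitely supported ℤ-valued functions on ℕ × ℤ) and let H be the free abelian group on the index set (ℕ × ℤ) ⊕ ℤ, with standard basis elements denoted p_{m,n} for (m,n) ∈ ℕ × ℤ and q_s for s ∈ ℤ. Let F : G → H be the unique group homomorphism sending the basis element indexed by (k,l) ∈ ℕ × ℤ to −Σ_{m=0}^{k−1} Σ_{n=l+1}^{l+k−m} p_{m,n} + Σ_{s=−l−k}^{−l} q_s. Then F is bijective. -/
open Finset
namespace Stmt9
abbrev G : Type := (ℕ × ℤ) →₀ ℤ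
abbrev H : Type := ((ℕ × ℤ) ⊕ ℤ) →₀ ℤ
noncomputable def a (k : ℕ) (l : ℤ) : G := Finsupp.single (k, l) 1
noncomputable def e : (ℕ × ℤ) ⊕ ℤ → G
  | Sum.inl (0, n) => a 0 n + a 0 (n-1) - a 1 (n-1)
  | Sum.inl (m+1, n) => a (m+1) n + a (m+1) (n-1) - a (m+2) (n-1) - a m n
  | Sum.inr s => a 0 (-s)
noncomputable def h : ℕ → ℤ → G
  | 0, _ => 0
  | (m+1), n => a m n
lemma e_eq (m : ℕ) (n : ℤ) :
    e (Sum.inl (m, n)) = a m n + a m (n-1) - a (m+1) (n-1) - h m n := by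
  cases m with
  | zero => simp [e, h]
  | succ m => simp [e, h]

lemma sum_Icc_top {M : Type} [AddCommMonoid M] (f : ℤ → M) {A B : ℤ} (hab : A ≤ B + 1) :
    ∑ n ∈ Icc A (B+1), f n = (∑ n ∈ Icc A B, f n) + f (B+1) := by
  have : Icc A (B+1) = insert (B+1) (Icc A B) := by ext x; simp; omega
  rw [this, Finset.sum_insert (by simp), add_comm]

lemma sum_Icc_bot {M : Type} [AddCommMonoid M] (f : ℤ → M) {A B : ℤ} (hab : A - 1 ≤ B) :
    ∑ n ∈ Icc (A-1) B, f n = f (A-1) + (∑ n ∈ Icc A B, f n) := by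
  have : Icc (A-1) B = insert (A-1) (Icc A B) := by ext x; simp; omega
  rw [this, Finset.sum_insert (by simp)]

lemma stepA {M : Type} [AddCommMonoid M] (w : ℕ → ℤ → M) (k : ℕ) (l : ℤ) :
    ∑ m ∈ range (k+1), ∑ n ∈ Icc (l+1) (l + ((k:ℤ)+1) - (m:ℤ)), w m n
      = (∑ m ∈ range k, ∑ n ∈ Icc (l+1) (l + (k:ℤ) - (m:ℤ)), w m n)
        + ∑ m ∈ range (k+1), w m (l + (k:ℤ) + 1 - (m:ℤ)) := by
  rw [Finset.sum_range_succ, Finset.sum_range_succ (f := fun m => w m (l + (k:ℤ) + 1 - (m:ℤ)))]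
  have h1 : ∀ m ∈ range k, ∑ n ∈ Icc (l+1) (l + ((k:ℤ)+1) - (m:ℤ)), w m n
      = (∑ n ∈ Icc (l+1) (l + (k:ℤ) - (m:ℤ)), w m n) + w m (l + (k:ℤ) + 1 - (m:ℤ)) := by
    intro m hm
    have hm' : (m:ℤ) < k := by exact_mod_cast mem_range.mp hm
    have h2 : l + ((k:ℤ)+1) - (m:ℤ) = (l + (k:ℤ) - (m:ℤ)) + 1 := by ring
    rw [h2, sum_Icc_top _ (by omega)]
    congr 2
    ring
  rw [Finset.sum_congr rfl h1, Finset.sum_add_distrib]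
  have h3 : Icc (l+1) (l + ((k:ℤ)+1) - (k:ℤ)) = {l+1} := by
    have : l + ((k:ℤ)+1) - (k:ℤ) = l + 1 := by ring
    rw [this, Finset.Icc_self]
  rw [h3, Finset.sum_singleton]
  have h4 : l + (k:ℤ) + 1 - (k:ℤ) = l + 1 := by ring
  rw [h4]
  abel


lemma keyS (k : ℕ) (l : ℤ) :
    ∑ m ∈ range (k+1), e (Sum.inl (m, l + (k:ℤ) + 1 - (m:ℤ)))
      = a 0 (l + (k:ℤ) + 1) - a (k+1) l + a k l := by
  have h1 : ∀ m ∈ range (k+1),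
      e (Sum.inl (m, l + (k:ℤ) + 1 - (m:ℤ)))
        = ((fun i : ℕ => a i (l + (k:ℤ) + 1 - (i:ℤ))) m
            - (fun i : ℕ => a i (l + (k:ℤ) + 1 - (i:ℤ))) (m+1))
          + (a m (l + (k:ℤ) - (m:ℤ)) - h m (l + (k:ℤ) + 1 - (m:ℤ))) := by
    intro m _
    rw [e_eq]
    have e2 : l + (k:ℤ) + 1 - (m:ℤ) - 1 = l + (k:ℤ) - (m:ℤ) := by ring
    have e3 : l + (k:ℤ) + 1 - ((m:ℤ)+1) = l + (k:ℤ) - (m:ℤ) := by ring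
    simp only [e2, Nat.cast_add, Nat.cast_one, e3]
    abel
  rw [Finset.sum_congr rfl h1, Finset.sum_add_distrib, Finset.sum_range_sub',
      Finset.sum_sub_distrib]
  have h2 : ∑ m ∈ range (k+1), h m (l + (k:ℤ) + 1 - (m:ℤ))
      = ∑ m ∈ range k, a m (l + (k:ℤ) - (m:ℤ)) := by
    rw [Finset.sum_range_succ']
    simp only [h, Nat.cast_zero, add_zero]
    apply Finset.sum_congr rfl
    intro m _
    congr 1
    push_cast
    ring
  rw [h2, Finset.sum_range_succ]
  have h3 : l + (k:ℤ) - (k:ℤ) = l := by ring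
  have h4 : l + (k:ℤ) + 1 - ((0:ℕ):ℤ) = l + (k:ℤ) + 1 := by push_cast; ring
  have h5 : l + (k:ℤ) + 1 - ((k+1:ℕ):ℤ) = l := by push_cast; ring
  rw [h3, h4, h5]
  abel

lemma keyD (k : ℕ) (l : ℤ) :
    ∑ m ∈ range k, ∑ n ∈ Icc (l+1) (l + (k:ℤ) - (m:ℤ)), e (Sum.inl (m, n))
      = (∑ s ∈ Icc (-l - (k:ℤ)) (-l), a 0 (-s)) - a k l := by
  induction k with
  | zero =>
      simp [a]
  | succ k ih =>
      have hc : ((k+1:ℕ):ℤ) = (k:ℤ)+1 := by push_cast; ring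
      rw [hc, stepA, ih, keyS]
      have hb : -l - ((k:ℤ)+1) = (-l - (k:ℤ)) - 1 := by ring
      rw [hb, sum_Icc_bot _ (by omega)]
      have : -(-l - (k:ℤ) - 1) = l + (k:ℤ) + 1 := by ring
      rw [this]
      abel

noncomputable def p (m : ℕ) (n : ℤ) : H := Finsupp.single (Sum.inl (m, n)) 1
noncomputable def q (s : ℤ) : H := Finsupp.single (Sum.inr s) 1

noncomputable def Pd (k : ℕ) (l : ℤ) : H :=
  ∑ m ∈ range k, ∑ x ∈ Icc (l+1) (l + (k:ℤ) - (m:ℤ)), Finsupp.single (Sum.inl (m, x)) 1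

noncomputable def Qd (k : ℕ) (l : ℤ) : H :=
  ∑ s ∈ Icc (-l - (k:ℤ)) (-l), Finsupp.single (Sum.inr s) 1

lemma Pd_succ (k : ℕ) (l : ℤ) :
    Pd (k+1) l = Pd k l + ∑ m ∈ range (k+1), p m (l + (k:ℤ) + 1 - (m:ℤ)) := by
  unfold Pd
  simp only [Nat.cast_add, Nat.cast_one]
  exact stepA (fun m x => Finsupp.single (Sum.inl (m, x)) 1) k l

lemma Qd_succ (k : ℕ) (l : ℤ) :
    Qd (k+1) l = q (-l - (k:ℤ) - 1) + Qd k l := by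
  unfold Qd q
  have hb : -l - ((k+1:ℕ):ℤ) = (-l - (k:ℤ)) - 1 := by push_cast; ring
  rw [hb, sum_Icc_bot _ (by omega)]

noncomputable def E : H →+ G :=
  Finsupp.liftAddHom (fun i => zmultiplesHom G (e i))

lemma E_single (i : (ℕ × ℤ) ⊕ ℤ) : E (Finsupp.single i 1) = e i := by
  simp [E]

section
variable (F : G →+ H)
variable (hF : ∀ (k : ℕ) (l : ℤ),
      F (Finsupp.single (k, l) 1) =
        -(∑ m ∈ Finset.range k, ∑ n ∈ Finset.Icc (l + 1) (l + (k : ℤ) - (m : ℤ)),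
            Finsupp.single (Sum.inl (m, n)) 1)
        + ∑ s ∈ Finset.Icc (-l - (k : ℤ)) (-l), Finsupp.single (Sum.inr s) 1)

include hF

lemma hF' : ∀ (k : ℕ) (l : ℤ), F (Finsupp.single (k, l) 1) = -Pd k l + Qd k l :=
  fun k l => hF k l

lemma EF_basis (k : ℕ) (l : ℤ) :
    E (F (Finsupp.single (k, l) 1)) = Finsupp.single (k, l) 1 := by
  rw [hF, map_add, map_neg, map_sum, map_sum]
  simp only [map_sum, E_single]
  have : ∀ s : ℤ, e (Sum.inr s) = a 0 (-s) := fun s => rfl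
  simp only [this]
  rw [keyD]
  show _ = a k l
  abel

lemma FE_inr (s : ℤ) :
    F (E (Finsupp.single (Sum.inr s) 1)) = Finsupp.single (Sum.inr s) 1 := by
  rw [E_single]
  show F (a 0 (-s)) = _
  rw [a, hF]
  simp

lemma FE_inl (m : ℕ) (n : ℤ) :
    F (E (Finsupp.single (Sum.inl (m, n)) 1)) = Finsupp.single (Sum.inl (m, n)) 1 := by
  rw [E_single]
  cases m with
  | zero =>
      show F (a 0 n + a 0 (n-1) - a 1 (n-1)) = _
      rw [map_sub, map_add]
      simp only [a]
      rw [hF' F hF 0 n, hF' F hF 0 (n-1), hF' F hF 1 (n-1)]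
      have e1 : Pd 1 (n-1) = Pd (0+1) (n-1) := rfl
      have e2 : Qd 1 (n-1) = Qd (0+1) (n-1) := rfl
      rw [e1, e2, Pd_succ, Qd_succ, Finset.sum_range_one]
      have h1 : p 0 ((n-1) + ((0:ℕ):ℤ) + 1 - ((0:ℕ):ℤ)) = p 0 n := by
        unfold p; congr 1; push_cast; ring
      have h2 : q (-(n-1) - ((0:ℕ):ℤ) - 1) = Qd 0 n := by
        unfold Qd q
        have h0 : -n - ((0:ℕ):ℤ) = -n := by push_cast; ring
        rw [h0, Finset.Icc_self, Finset.sum_singleton]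
        congr 2
        ring
      have hP : ∀ l : ℤ, Pd 0 l = 0 := fun l => by simp [Pd]
      rw [h1, h2, hP]
      show -Pd 0 n + Qd 0 n + (-Pd 0 (n-1) + Qd 0 (n-1))
          - (-(0 + p 0 n) + (Qd 0 n + Qd 0 (n-1))) = p 0 n
      rw [hP, hP]
      abel
  | succ t =>
      show F (a (t+1) n + a (t+1) (n-1) - a (t+2) (n-1) - a t n) = _
      rw [map_sub, map_sub, map_add]
      simp only [a]
      rw [hF' F hF (t+1) n, hF' F hF (t+1) (n-1), hF' F hF (t+2) (n-1), hF' F hF t n]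
      have ht2 : t + 2 = (t+1)+1 := rfl
      rw [ht2, Pd_succ (t+1) (n-1), Qd_succ (t+1) (n-1), Pd_succ t n, Qd_succ t n]
      have hq : -(n-1) - (((t+1:ℕ)):ℤ) - 1 = -n - (t:ℤ) - 1 := by push_cast; ring
      rw [hq]
      have hR : ∑ m ∈ range (t+1+1), p m ((n-1) + ((t+1:ℕ):ℤ) + 1 - (m:ℤ))
          = (∑ m ∈ range (t+1), p m (n + (t:ℤ) + 1 - (m:ℤ))) + p (t+1) n := by
        rw [Finset.sum_range_succ]
        congr 1
        · apply Finset.sum_congr rfl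
          intro m _
          congr 1
          push_cast; ring
        · congr 1
          push_cast; ring
      rw [hR]
      abel

end

end Stmt9

/-- Let `G = (ℕ × ℤ) →₀ ℤ` and `H = ((ℕ × ℤ) ⊕ ℤ) →₀ ℤ` be free abelian groups,
with standard basis elements `p_{m,n}` (indexed by `Sum.inl (m,n)`) and `q_s` (indexed by
`Sum.inr s`) in `H`. If `F : G →+ H` sends the basis element indexed by `(k, l)` to
`−Σ_{m=0}^{k−1} Σ_{n=l+1}^{l+k−m} p_{m,n} + Σ_{s=−l−k}^{−l} q_s`, then `F` is bijective. -/
theorem stmt9 (F : ((ℕ × ℤ) →₀ ℤ) →+ (((ℕ × ℤ) ⊕ ℤ) →₀ ℤ))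
    (hF : ∀ (k : ℕ) (l : ℤ),
      F (Finsupp.single (k, l) 1) =
        -(∑ m ∈ Finset.range k, ∑ n ∈ Finset.Icc (l + 1) (l + (k : ℤ) - (m : ℤ)),
            Finsupp.single (Sum.inl (m, n)) 1)
        + ∑ s ∈ Finset.Icc (-l - (k : ℤ)) (-l), Finsupp.single (Sum.inr s) 1) :
    Function.Bijective F := by
  have hEF : ∀ x, Stmt9.E (F x) = x := by
    have heq : Stmt9.E.comp F = AddMonoidHom.id Stmt9.G := by
      apply Finsupp.addHom_ext
      rintro ⟨k, l⟩ c
      have hs : (Finsupp.single ((k,l) : ℕ × ℤ) c : Stmt9.G)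
          = c • Finsupp.single (k,l) (1:ℤ) := by
        rw [Finsupp.smul_single, smul_eq_mul, mul_one]
      rw [hs, map_zsmul, map_zsmul, AddMonoidHom.id_apply, AddMonoidHom.comp_apply,
        Stmt9.EF_basis F hF]
    intro x
    exact DFunLike.congr_fun heq x
  have hFE : ∀ y, F (Stmt9.E y) = y := by
    have heq : F.comp Stmt9.E = AddMonoidHom.id Stmt9.H := by
      apply Finsupp.addHom_ext
      rintro (⟨m, n⟩ | s) c
      · have hs : (Finsupp.single (Sum.inl (m,n) : (ℕ × ℤ) ⊕ ℤ) c : Stmt9.H)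
            = c • Finsupp.single (Sum.inl (m,n)) (1:ℤ) := by
          rw [Finsupp.smul_single, smul_eq_mul, mul_one]
        rw [hs, map_zsmul, map_zsmul, AddMonoidHom.id_apply, AddMonoidHom.comp_apply,
          Stmt9.FE_inl F hF]
      · have hs : (Finsupp.single (Sum.inr s : (ℕ × ℤ) ⊕ ℤ) c : Stmt9.H)
            = c • Finsupp.single (Sum.inr s) (1:ℤ) := by
          rw [Finsupp.smul_single, smul_eq_mul, mul_one]
        rw [hs, map_zsmul, map_zsmul, AddMonoidHom.id_apply, AddMonoidHom.comp_apply,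
          Stmt9.FE_inr F hF]
    intro y
    exact DFunLike.congr_fun heq y
  exact ⟨fun x y hxy => by rw [← hEF x, hxy, hEF], fun y => ⟨Stmt9.E y, hFE y⟩⟩
end

section
/- Let ω : ℤ² × ℤ² → ℂˣ be a 2-cocycle for the trivial action, i.e. ω(g,h)·ω(g+h,k) = ω(g,h+k)·ω(h,k) for all g, h, k ∈ ℤ². Then ω is cohomologous to a cocycle taking values in the unit circle 𝕋 = {w ∈ ℂˣ : |w| = 1} (i.e. there exists b : ℤ² → ℂˣ such that (g,h) ↦ ω(g,h)·b(g)·b(h)·b(g+h)⁻¹ takes values in 𝕋) if and only if |ω(e₁,e₂)| = |ω(e₂,e₁)|, where e₁ = (1,0) and e₂ = (0,1). -/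
/-!
Taking `log ‖·‖` turns `ω` into a real 2-cocycle `f` and `b` into a real 1-cochain, so the
question is whether `f` is a coboundary. On `ℤ²`, for any coefficient group, the antisymmetrisation
`f g h - f h g` of a cocycle is an alternating biadditive form, hence equals
`(g₁h₂ - g₂h₁) • (f e₁ e₂ - f e₂ e₁)`. Coboundaries are symmetric; conversely a symmetric cocycle
defines an abelian extension of `ℤ²`, which splits because `ℤ²` is free, and the first coordinate
of an additive section is a cochain bounding `f`.
-/

theorem AddMonoidHom.apply_int_prod {A : Type*} [AddCommGroup A] (ψ : ℤ × ℤ →+ A) (g : ℤ × ℤ) :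
    ψ g = g.1 • ψ (1, 0) + g.2 • ψ (0, 1) := by
  conv_lhs => rw [show g = g.1 • (1, 0) + g.2 • (0, 1) by ext <;> simp]
  rw [map_add, map_zsmul, map_zsmul]

section Cocycle

variable {G A : Type*} [AddCommGroup G] [AddCommGroup A]

/-- 2-cocycles and 2-coboundaries of `G` with coefficients in `A`, for the trivial action. -/
def IsAddCocycle₂ (f : G → G → A) : Prop :=
  ∀ g h k, f g h + f (g + h) k = f g (h + k) + f h k

def IsAddCoboundary₂ (f : G → G → A) : Prop :=
  ∃ φ : G → A, ∀ g h, f g h = φ (g + h) - φ g - φ h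

theorem IsAddCoboundary₂.apply_comm {f : G → G → A} (hf : IsAddCoboundary₂ f) (g h : G) :
    f g h = f h g := by
  obtain ⟨φ, hφ⟩ := hf
  rw [hφ, hφ, add_comm h g, sub_right_comm]

namespace IsAddCocycle₂

variable {f : G → G → A}

theorem apply_zero_left (hf : IsAddCocycle₂ f) (g : G) : f 0 g = f 0 0 := by
  simpa using (hf 0 0 g).symm

theorem sub_swap_add_left (hf : IsAddCocycle₂ f) (g h k : G) :
    f (g + h) k - f k (g + h) = (f g k - f k g) + (f h k - f k h) := by
  have h₁ := hf g h k
  have h₂ := hf k g h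
  have h₃ := hf g k h
  rw [add_comm k g] at h₂
  rw [add_comm k h] at h₃
  linear_combination (norm := abel) h₁ + h₂ - h₃

theorem sub_swap_eq_int_prod {f : ℤ × ℤ → ℤ × ℤ → A} (hf : IsAddCocycle₂ f) (g h : ℤ × ℤ) :
    f g h - f h g = (g.1 * h.2 - g.2 * h.1) • (f (1, 0) (0, 1) - f (0, 1) (1, 0)) := by
  set c : ℤ × ℤ → ℤ × ℤ → A := fun g h => f g h - f h g
  have hc : ∀ g h, c g h = -c h g := fun g h => (neg_sub _ _).symm
  have hcc : ∀ g, c g g = 0 := fun g => sub_self _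
  have hexpand : ∀ g k, c g k = g.1 • c (1, 0) k + g.2 • c (0, 1) k := fun g k =>
    (AddMonoidHom.mk' (c · k) (hf.sub_swap_add_left · · k)).apply_int_prod g
  show c g h = _
  rw [hexpand g h, hc (1, 0), hc (0, 1), hexpand h, hexpand h, hcc, hcc, hc (0, 1) (1, 0)]
  module

end IsAddCocycle₂

@[ext]
structure CocycleExt (f : G → G → A) where
  fst : A
  snd : G

namespace CocycleExt

variable {f : G → G → A}

instance : Add (CocycleExt f) := ⟨fun p q => ⟨p.fst + q.fst + f p.snd q.snd, p.snd + q.snd⟩⟩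
instance : Zero (CocycleExt f) := ⟨⟨-f 0 0, 0⟩⟩
instance : Neg (CocycleExt f) := ⟨fun p => ⟨-p.fst - f (-p.snd) p.snd - f 0 0, -p.snd⟩⟩

@[simp] theorem fst_add (p q : CocycleExt f) :
    (p + q).fst = p.fst + q.fst + f p.snd q.snd := rfl
@[simp] theorem snd_add (p q : CocycleExt f) : (p + q).snd = p.snd + q.snd := rfl
@[simp] theorem fst_zero : (0 : CocycleExt f).fst = -f 0 0 := rfl
@[simp] theorem snd_zero : (0 : CocycleExt f).snd = 0 := rfl
@[simp] theorem fst_neg (p : CocycleExt f) :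
    (-p).fst = -p.fst - f (-p.snd) p.snd - f 0 0 := rfl
@[simp] theorem snd_neg (p : CocycleExt f) : (-p).snd = -p.snd := rfl

abbrev addCommGroup (hf : IsAddCocycle₂ f) (hs : ∀ g h, f g h = f h g) :
    AddCommGroup (CocycleExt f) :=
  { AddGroup.ofLeftAxioms
      (fun p q r => CocycleExt.ext
        (by simp only [fst_add, snd_add]; linear_combination (norm := abel) hf p.snd q.snd r.snd)
        (add_assoc ..))
      (fun p => CocycleExt.ext
        (by simp only [fst_add, fst_zero, snd_zero, hf.apply_zero_left]; abel) (zero_add _))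
      (fun p => CocycleExt.ext (by simp only [fst_add, fst_neg, fst_zero, snd_neg]; abel)
        (neg_add_cancel _)) with
    add_comm := fun p q => CocycleExt.ext (by simp only [fst_add, hs p.snd]; abel) (add_comm ..) }

end CocycleExt

theorem IsAddCocycle₂.isAddCoboundary₂_of_apply_comm [Module.Projective ℤ G] {f : G → G → A}
    (hf : IsAddCocycle₂ f) (hs : ∀ g h, f g h = f h g) : IsAddCoboundary₂ f := by
  let := CocycleExt.addCommGroup hf hs
  let π : CocycleExt f →+ G := ⟨⟨CocycleExt.snd, rfl⟩, CocycleExt.snd_add⟩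
  obtain ⟨s, hπs⟩ := Module.projective_lifting_property π.toIntLinearMap LinearMap.id
    fun g => ⟨⟨0, g⟩, rfl⟩
  have hsnd (g : G) : (s g).snd = g := LinearMap.congr_fun hπs g
  refine ⟨fun g => (s g).fst, fun g h => ?_⟩
  have := congrArg CocycleExt.fst (map_add s g h)
  rw [CocycleExt.fst_add, hsnd, hsnd] at this
  dsimp only
  rw [this]
  abel

theorem IsAddCocycle₂.isAddCoboundary₂_iff_int_prod {f : ℤ × ℤ → ℤ × ℤ → A}
    (hf : IsAddCocycle₂ f) : IsAddCoboundary₂ f ↔ f (1, 0) (0, 1) = f (0, 1) (1, 0) := by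
  refine ⟨fun hcob => hcob.apply_comm _ _, fun h₁₂ => hf.isAddCoboundary₂_of_apply_comm ?_⟩
  intro g h
  rw [← sub_eq_zero, hf.sub_swap_eq_int_prod, h₁₂, sub_self, smul_zero]

end Cocycle

section LogNorm

variable {𝕜 : Type*}

noncomputable def logNorm [NormedDivisionRing 𝕜] (u : 𝕜ˣ) : ℝ := Real.log ‖(u : 𝕜)‖

theorem logNorm_mul [NormedDivisionRing 𝕜] (u v : 𝕜ˣ) :
    logNorm (u * v) = logNorm u + logNorm v := by
  simp only [logNorm, Units.val_mul, norm_mul]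
  exact Real.log_mul (by simp) (by simp)

theorem logNorm_inv [NormedDivisionRing 𝕜] (u : 𝕜ˣ) : logNorm u⁻¹ = -logNorm u := by
  simp [logNorm]

theorem logNorm_inj [NormedDivisionRing 𝕜] {u v : 𝕜ˣ} :
    logNorm u = logNorm v ↔ ‖(u : 𝕜)‖ = ‖(v : 𝕜)‖ :=
  Real.log_injOn_pos.eq_iff (norm_pos_iff.2 u.ne_zero) (norm_pos_iff.2 v.ne_zero)

theorem logNorm_eq_zero [NormedDivisionRing 𝕜] {u : 𝕜ˣ} : logNorm u = 0 ↔ ‖(u : 𝕜)‖ = 1 := by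
  simpa [logNorm] using logNorm_inj (u := u) (v := 1)

theorem logNorm_surjective [RCLike 𝕜] : Function.Surjective (logNorm : 𝕜ˣ → ℝ) := fun x =>
  ⟨Units.mk0 (Real.exp x : 𝕜) (by simp [Real.exp_ne_zero]), by simp [logNorm, Real.abs_exp]⟩

theorem exists_norm_eq_one_iff_isAddCoboundary₂ [RCLike 𝕜] {G : Type*} [AddCommGroup G]
    (ω : G → G → 𝕜ˣ) :
    (∃ b : G → 𝕜ˣ, ∀ g h, ‖((ω g h * (b g * b h * (b (g + h))⁻¹) : 𝕜ˣ) : 𝕜)‖ = 1) ↔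
      IsAddCoboundary₂ fun g h => logNorm (ω g h) := by
  have key (b : G → 𝕜ˣ) (g h : G) :
      ‖((ω g h * (b g * b h * (b (g + h))⁻¹) : 𝕜ˣ) : 𝕜)‖ = 1 ↔
        logNorm (ω g h) = logNorm (b (g + h)) - logNorm (b g) - logNorm (b h) := by
    rw [← logNorm_eq_zero, logNorm_mul, logNorm_mul, logNorm_mul, logNorm_inv]
    constructor <;> intro h <;> linear_combination h
  constructor
  · rintro ⟨b, hb⟩
    exact ⟨fun g => logNorm (b g), fun g h => (key b g h).1 (hb g h)⟩
  · rintro ⟨φ, hφ⟩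
    choose b hb using fun g => logNorm_surjective (𝕜 := 𝕜) (φ g)
    exact ⟨b, fun g h => (key b g h).2 (by simpa only [hb] using hφ g h)⟩

end LogNorm

/-- A `ℂˣ`-valued 2-cocycle `ω` on `ℤ²` (trivial action) is cohomologous to a
circle-valued cocycle if and only if `|ω(e₁,e₂)| = |ω(e₂,e₁)|`. -/
theorem stmt11 (ω : (ℤ × ℤ) → (ℤ × ℤ) → ℂˣ)
    (hω : ∀ g h k : ℤ × ℤ, ω g h * ω (g + h) k = ω g (h + k) * ω h k) :
    (∃ b : (ℤ × ℤ) → ℂˣ, ∀ g h : ℤ × ℤ,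
        ‖((ω g h * (b g * b h * (b (g + h))⁻¹) : ℂˣ) : ℂ)‖ = 1) ↔
      ‖((ω (1, 0) (0, 1) : ℂˣ) : ℂ)‖
        = ‖((ω (0, 1) (1, 0) : ℂˣ) : ℂ)‖ := by
  have hf : IsAddCocycle₂ fun g h => logNorm (ω g h) := fun g h k => by
    simpa only [logNorm_mul] using congrArg logNorm (hω g h k)
  rw [exists_norm_eq_one_iff_isAddCoboundary₂, hf.isAddCoboundary₂_iff_int_prod, logNorm_inj]
end

section
/- Let B be a unital complex star algebra, let q > 0 be a real number, and let a, b ∈ ℂ with |a·b| = 1. Suppose z ∈ B satisfies z·z* = z*·z = 1, and y, w ∈ B satisfy y* = −q^{−1/2}·a·w·z* and w* = q^{1/2}·b·y·z*. Then z·y·z* = −a·b̄·y, where b̄ is the complex conjugate of b. -/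
/-! Taking the adjoint of the relation for `y*` and substituting the relation for `w*` gives
`y = -(q^{-1/2} conj a · q^{1/2} b) z y z* = -(conj a · b) z y z*`; since
`(a conj b)(conj a b) = |ab|² = 1`, the scalar can be inverted. -/

open ComplexConjugate

section Algebra

variable {R A : Type*} [CommSemiring R] [Ring A] [Algebra R A]

theorem eq_neg_algebraMap_mul_conj_of_star_eq [StarRing R] [StarRing A] [StarModule R A]
    {c d : R} {y w z : A}
    (hy : star y = -algebraMap R A c * w * star z)
    (hw : star w = algebraMap R A d * y * star z) :
    y = -algebraMap R A (star c * d) * (z * y * star z) := by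
  calc y = star (star y) := (star_star y).symm
    _ = z * star w * -algebraMap R A (star c) := by
      rw [hy, star_mul, star_mul, star_star, star_neg, algebraMap_star_comm, mul_assoc]
    _ = -algebraMap R A (star c * d) * (z * y * star z) := by
      rw [hw, map_mul, mul_neg, neg_mul, ← Algebra.commutes, mul_assoc (algebraMap R A d),
        Algebra.left_comm z, mul_assoc, mul_assoc]

theorem eq_neg_algebraMap_mul_of_mul_eq_one {c c' : R} {x y : A} (hc : c' * c = 1)
    (h : y = -algebraMap R A c * x) : x = -algebraMap R A c' * y := by
  rw [h, neg_mul, neg_mul, mul_neg, neg_neg, ← mul_assoc, ← map_mul, hc, map_one, one_mul]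

end Algebra

theorem Complex.mul_conj_mul_conj_mul (a b : ℂ) :
    a * conj b * (conj a * b) = (‖a * b‖ ^ 2 : ℝ) := by
  rw [mul_mul_mul_comm, mul_conj', conj_mul', norm_mul]
  push_cast
  ring

theorem stmt13_general {B : Type*} [Ring B] [Algebra ℂ B] [StarRing B] [StarModule ℂ B]
    (q : ℝ) (hq : 0 < q) (a b : ℂ) (hab : ‖a * b‖ = 1)
    (z y w : B)
    (hy : star y = -(algebraMap ℂ B (((Real.sqrt q)⁻¹ : ℝ) * a)) * w * star z)
    (hw : star w = algebraMap ℂ B ((Real.sqrt q : ℝ) * b) * y * star z) :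
    z * y * star z = -(algebraMap ℂ B (a * (starRingEnd ℂ) b)) * y := by
  have hsqrt : (Real.sqrt q : ℂ) ≠ 0 := by exact_mod_cast (Real.sqrt_pos.2 hq).ne'
  have hscalar : star (((Real.sqrt q)⁻¹ : ℝ) * a) * ((Real.sqrt q : ℝ) * b) = conj a * b := by
    rw [star_mul', Complex.star_def, Complex.conj_ofReal]
    push_cast
    field_simp
  have hy' := eq_neg_algebraMap_mul_conj_of_star_eq hy hw
  rw [hscalar] at hy'
  refine eq_neg_algebraMap_mul_of_mul_eq_one ?_ hy'
  rw [Complex.mul_conj_mul_conj_mul, hab]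
  norm_num

/-- In a unital complex star algebra `B`, if `z` is unitary, `q > 0`,
`|a·b| = 1`, and `y* = −q^{−1/2}·a·w·z*`, `w* = q^{1/2}·b·y·z*`, then
`z·y·z* = −a·conj(b)·y`. -/
theorem stmt13 {B : Type*} [Ring B] [Algebra ℂ B] [StarRing B] [StarModule ℂ B]
    (q : ℝ) (hq : 0 < q) (a b : ℂ) (hab : ‖a * b‖ = 1)
    (z y w : B) (hz₁ : z * star z = 1) (hz₂ : star z * z = 1)
    (hy : star y = -(algebraMap ℂ B (((Real.sqrt q)⁻¹ : ℝ) * a)) * w * star z)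
    (hw : star w = algebraMap ℂ B ((Real.sqrt q : ℝ) * b) * y * star z) :
    z * y * star z = -(algebraMap ℂ B (a * (starRingEnd ℂ) b)) * y :=
  stmt13_general q hq a b hab z y w hy hw
end
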